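/- The 6×6 matrix A with rows (0,0,0,0,1,0), (0,0,0,0,1,1), (1,1,0,0,0,0), (0,1,0,0,0,0), (0,0,1,1,0,0), (0,0,1,0,0,0) satisfies: A^3 is block diagonal with three 2×2 blocks, each block being one of [[1,2],[2,3]], [[3,2],[2,1]], [[3,2],[2,1]], and the characteristic polynomial of each 2×2 block is x^2 − 4x − 1, so each block has eigenvalues 2 + √5 and 2 − √5. -/

import Mathlib

/-!
The transition matrix maps the coordinate blocks `{4,5} → {0,1} → {2,3} → {4,5}` cyclically, so
its cube is block diagonal, the three blocks being the cyclic rotations of one product of three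
`2 × 2` matrices. Rotated products share trace and determinant, here `4` and `-1`, hence the
common characteristic polynomial `x² - 4x - 1 = (x - (2 + √5)) (x - (2 - √5))`.
-/

open Polynomial

def shapeTransition (R : Type*) [Zero R] [One R] : Matrix (Fin 6) (Fin 6) R :=
  !![0,0,0,0,1,0; 0,0,0,0,1,1; 1,1,0,0,0,0; 0,1,0,0,0,0; 0,0,1,1,0,0; 0,0,1,0,0,0]

theorem shapeTransition_pow_three (R : Type*) [Semiring R] :
    shapeTransition R ^ 3 =
      !![1,2,0,0,0,0; 2,3,0,0,0,0; 0,0,3,2,0,0; 0,0,2,1,0,0; 0,0,0,0,3,2; 0,0,0,0,2,1] := by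
  rw [pow_three]
  ext i j
  fin_cases i <;> fin_cases j <;> norm_num [shapeTransition, Matrix.mul_apply, Fin.sum_univ_succ]

theorem Matrix.charpoly_fin_two_of {R : Type*} [CommRing R] [Nontrivial R] (a b c d : R) :
    (!![a, b; c, d] : Matrix (Fin 2) (Fin 2) R).charpoly =
      X ^ 2 - C (a + d) * X + C (a * d - b * c) := by
  rw [Matrix.charpoly_fin_two, Matrix.trace_fin_two_of, Matrix.det_fin_two_of]

theorem Polynomial.X_sub_C_mul_X_sub_C {R : Type*} [CommRing R] (u v : R) :
    (X - C u) * (X - C v) = X ^ 2 - C (u + v) * X + C (u * v) := by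
  simp only [map_add, map_mul]
  ring

theorem X_sq_sub_four_mul_X_sub_one_eq :
    (X ^ 2 - 4 * X - 1 : ℝ[X]) = (X - C (2 + √5)) * (X - C (2 - √5)) := by
  have hsum : (2 + √5) + (2 - √5) = 4 := by ring
  have hprod : (2 + √5) * (2 - √5) = -1 := by
    nlinarith [Real.sq_sqrt (show (0 : ℝ) ≤ 5 by norm_num)]
  rw [X_sub_C_mul_X_sub_C, hsum, hprod]
  simp only [map_neg, map_one, map_ofNat, sub_eq_add_neg]

/-- The cube of the shape-transition adjacency matrix for rank 3, level 2 is block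
diagonal with 2×2 blocks whose characteristic polynomial is `x² − 4x − 1`,
with eigenvalues `2 ± √5`. -/
theorem shape_transition_r3_l2 (A : Matrix (Fin 6) (Fin 6) ℝ)
    (hA : A = !![0,0,0,0,1,0; 0,0,0,0,1,1; 1,1,0,0,0,0; 0,1,0,0,0,0; 0,0,1,1,0,0; 0,0,1,0,0,0]) :
    A ^ 3 = !![1,2,0,0,0,0; 2,3,0,0,0,0; 0,0,3,2,0,0; 0,0,2,1,0,0; 0,0,0,0,3,2; 0,0,0,0,2,1]
    ∧ Matrix.charpoly (!![1,2; 2,3] : Matrix (Fin 2) (Fin 2) ℝ) = X ^ 2 - 4 * X - 1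
    ∧ Matrix.charpoly (!![3,2; 2,1] : Matrix (Fin 2) (Fin 2) ℝ) = X ^ 2 - 4 * X - 1
    ∧ (X ^ 2 - 4 * X - 1 : Polynomial ℝ).IsRoot (2 + Real.sqrt 5)
    ∧ (X ^ 2 - 4 * X - 1 : Polynomial ℝ).IsRoot (2 - Real.sqrt 5) := by
  subst hA
  refine ⟨shapeTransition_pow_three ℝ, ?_, ?_, ?_, ?_⟩
  · rw [Matrix.charpoly_fin_two_of]
    norm_num [sub_eq_add_neg, C_ofNat]
  · rw [Matrix.charpoly_fin_two_of]
    norm_num [sub_eq_add_neg, C_ofNat]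
  · rw [X_sq_sub_four_mul_X_sub_one_eq]
    exact root_mul_right_of_isRoot _ (root_X_sub_C.2 rfl)
  · rw [X_sq_sub_four_mul_X_sub_one_eq]
    exact root_mul_left_of_isRoot _ (root_X_sub_C.2 rfl)
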